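/- arXiv:2103.03185 — 8 statements merged into one kernel-verified Lean document; each statement's English description precedes it below -/
import Mathlib

section
/- Let A be an n×n complex matrix and λ an eigenvalue of A whose Jordan blocks all have size at least k (i.e., the smallest Jordan block of λ has size k). Then for every j with 1 ≤ j ≤ k−1, the kernel of (A − λI)^j is contained in the range of A − λI. -/
open Matrix LinearMap

set_option synthInstance.maxHeartbeats 1000000
set_option maxHeartbeats 1000000

/-- If every Jordan block of the eigenvalue `μ` of `A` has size at least `k`
(encoded via the Weyr characteristic: `dim ker (A-μI)^j = j*m` for all `j ≤ k`, where
`m > 0` is the geometric multiplicity, and the Segre anchor is exactly `k`), then for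
`1 ≤ j ≤ k-1` the kernel of `(A-μI)^j` is contained in the range of `A - μI`. -/
theorem kernel_pow_subset_range
    (n k m : ℕ) (A : Matrix (Fin n) (Fin n) ℂ) (μ : ℂ)
    (hm : 0 < m)
    (hgm : Module.finrank ℂ (LinearMap.ker (A - μ • 1).mulVecLin) = m)
    (hW : ∀ j ≤ k, Module.finrank ℂ (LinearMap.ker (((A - μ • 1) ^ j).mulVecLin)) = j * m)
    (hanchor : Module.finrank ℂ
        (LinearMap.ker (((A - μ • 1) ^ (k + 1)).mulVecLin)) < (k + 1) * m) :
    ∀ j, 1 ≤ j → j ≤ k - 1 →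
      LinearMap.ker (((A - μ • 1) ^ j).mulVecLin) ≤
        LinearMap.range (A - μ • 1).mulVecLin := by
  intro j hj1 hjk
  set B := A - μ • 1 with hB
  set f := B.mulVecLin with hf
  have hsucc : ((B ^ (j+1)).mulVecLin) = (B ^ j).mulVecLin ∘ₗ f := by
    rw [pow_succ, Matrix.mulVecLin_mul]
  have hjk' : j + 1 ≤ k := by omega
  set K := LinearMap.ker ((B ^ (j+1)).mulVecLin) with hK
  -- f maps K into ker (B^j)
  have hmap : Submodule.map f K ≤ LinearMap.ker ((B ^ j).mulVecLin) := by
    rintro _ ⟨x, hx, rfl⟩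
    rw [SetLike.mem_coe, hK, LinearMap.mem_ker, hsucc] at hx
    exact hx
  -- ker f ≤ K
  have hkerle : LinearMap.ker f ≤ K := by
    intro x hx
    rw [hK, LinearMap.mem_ker, hsucc]
    simp only [LinearMap.comp_apply]
    rw [LinearMap.mem_ker.mp hx]
    simp
  -- dimension of ker of restriction
  have hkerres : Module.finrank ℂ (LinearMap.ker (f.domRestrict K)) = m := by
    rw [LinearMap.ker_domRestrict]
    rw [(Submodule.comapSubtypeEquivOfLe hkerle).finrank_eq]
    exact hgm
  have hKdim : Module.finrank ℂ K = (j + 1) * m := hW (j+1) hjk'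
  have hrange : Module.finrank ℂ (LinearMap.range (f.domRestrict K)) = j * m := by
    have := LinearMap.finrank_range_add_finrank_ker (f.domRestrict K)
    rw [hkerres, hKdim, add_one_mul] at this
    omega
  have hmapdim : Module.finrank ℂ (Submodule.map f K) = j * m := by
    rw [← LinearMap.range_domRestrict]
    exact hrange
  have heq : Submodule.map f K = LinearMap.ker ((B ^ j).mulVecLin) := by
    apply Submodule.eq_of_le_of_finrank_le hmap
    rw [hmapdim, hW j (by omega)]
  intro x hx
  rw [← heq] at hx
  obtain ⟨y, _, rfl⟩ := hx
  exact ⟨y, rfl⟩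
end

section
/- Let A be an n×n complex matrix and λ an eigenvalue whose smallest Jordan block has size k. Then every eigenvector x of A for λ (i.e., x ∈ ker(A − λI)) lies in the range of (A − λI)^j for all j = 1, …, k−1. -/
open Matrix LinearMap

lemma mulVecLin_pow' {n : ℕ} (B : Matrix (Fin n) (Fin n) ℂ) (j : ℕ) :
    (B ^ j).mulVecLin = B.mulVecLin ^ j := by
  induction j with
  | zero => simp only [pow_zero, Matrix.mulVecLin_one]; rfl
  | succ i ih => rw [pow_succ, Matrix.mulVecLin_mul, ih, pow_succ]; rfl

set_option synthInstance.maxHeartbeats 1000000 in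
/-- If the smallest Jordan block of the eigenvalue `μ` of `A` has size `k`
(encoded via the Weyr characteristic), then every eigenvector `x ∈ ker (A - μI)` lies in
the range of `(A - μI)^j` for all `j = 1, …, k-1`. -/
theorem eigenvector_mem_range_pow
    (n k m : ℕ) (A : Matrix (Fin n) (Fin n) ℂ) (μ : ℂ)
    (hm : 0 < m)
    (hgm : Module.finrank ℂ (LinearMap.ker (A - μ • 1).mulVecLin) = m)
    (hW : ∀ j ≤ k, Module.finrank ℂ (LinearMap.ker (((A - μ • 1) ^ j).mulVecLin)) = j * m)
    (hanchor : Module.finrank ℂ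
        (LinearMap.ker (((A - μ • 1) ^ (k + 1)).mulVecLin)) < (k + 1) * m) :
    ∀ x : Fin n → ℂ, x ∈ LinearMap.ker (A - μ • 1).mulVecLin →
      ∀ j, 1 ≤ j → j ≤ k - 1 →
        x ∈ LinearMap.range (((A - μ • 1) ^ j).mulVecLin) := by
  intro x hx j hj1 hjk
  set f := (A - μ • 1).mulVecLin with hf
  have hjk' : j + 1 ≤ k := by omega
  -- kernels as powers of f
  have hker : ∀ i ≤ k, Module.finrank ℂ (LinearMap.ker (f ^ i)) = i * m := by
    intro i hi
    rw [← mulVecLin_pow']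
    exact hW i hi
  -- the restricted map
  set K := LinearMap.ker (f ^ (j + 1)) with hK
  set φ := (f ^ j).domRestrict K with hφ
  have hle : LinearMap.ker (f ^ j) ≤ K := by
    intro y hy
    simp only [LinearMap.mem_ker] at hy
    show (f ^ (j + 1)) y = 0
    rw [pow_succ', Module.End.mul_apply, hy, map_zero]
  -- kernel of φ
  have hkerφ : LinearMap.ker φ = Submodule.comap K.subtype (LinearMap.ker (f ^ j)) := by
    ext y; simp [hφ, LinearMap.mem_ker]
  have hkerφ_rank : Module.finrank ℂ (LinearMap.ker φ) = j * m := by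
    rw [hkerφ]
    rw [LinearEquiv.finrank_eq (Submodule.comapSubtypeEquivOfLe hle)]
    exact hker j (by omega)
  -- range of φ is contained in ker f
  have hrange_le : LinearMap.range φ ≤ LinearMap.ker f := by
    rintro y ⟨⟨z, hz⟩, rfl⟩
    simp only [LinearMap.mem_ker, hφ, LinearMap.domRestrict_apply]
    have : (f ^ (j + 1)) z = 0 := hz
    rw [pow_succ'] at this
    exact this
  -- rank computation
  have hrankK : Module.finrank ℂ K = (j + 1) * m := hker (j + 1) hjk'
  have hrn : Module.finrank ℂ (LinearMap.range φ) + Module.finrank ℂ (LinearMap.ker φ)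
      = Module.finrank ℂ K := LinearMap.finrank_range_add_finrank_ker φ
  have hrange_rank : Module.finrank ℂ (LinearMap.range φ) = m := by
    rw [hkerφ_rank, hrankK, add_mul, one_mul] at hrn
    omega
  -- conclude range φ = ker f
  have heq : LinearMap.range φ = LinearMap.ker f := by
    apply Submodule.eq_of_le_of_finrank_le hrange_le
    rw [hgm, hrange_rank]
  -- x ∈ ker f = range φ ≤ range (f^j)
  rw [← heq] at hx
  obtain ⟨⟨z, hz⟩, hzx⟩ := hx
  rw [mulVecLin_pow']
  exact ⟨z, hzx⟩
end

section
/- Let A ∈ ℂ^{n×n}, λ ∈ ℂ, and S ∈ ℂ^{k×k} strictly upper triangular with nonzero entries s_{12}, s_{23}, …, s_{k−1,k} on the first superdiagonal (so rank S = k−1). If X = [x₁,…,x_k] ∈ ℂ^{n×k} satisfies (A − λI)X = X S and x₁ ≠ 0, then for every j, x_j ∉ ker((A − λI)^{j−1}); in particular the columns x₁, …, x_k are linearly independent. -/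
open Matrix

/-- If `S` is strictly upper triangular with nonzero first-superdiagonal
entries, `(A - μI) X = X S` and the first column `x₁` of `X` is nonzero, then the `j`-th
column of `X` does not lie in `ker ((A - μI)^{j-1})`; in particular the columns of `X`
are linearly independent. -/
theorem columns_not_mem_ker_and_linearIndependent
    (n k : ℕ) (hk : 0 < k) (A : Matrix (Fin n) (Fin n) ℂ) (μ : ℂ)
    (S : Matrix (Fin k) (Fin k) ℂ)
    (hS : ∀ i j : Fin k, j ≤ i → S i j = 0)
    (hsd : ∀ (j : ℕ) (h : j + 1 < k), S ⟨j, Nat.lt_of_succ_lt h⟩ ⟨j + 1, h⟩ ≠ 0)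
    (X : Matrix (Fin n) (Fin k) ℂ)
    (hX : (A - μ • 1) * X = X * S)
    (hx1 : Xᵀ ⟨0, hk⟩ ≠ 0) :
    (∀ j : Fin k, Xᵀ j ∉ LinearMap.ker (((A - μ • 1) ^ (j : ℕ)).mulVecLin)) ∧
    LinearIndependent ℂ (fun j : Fin k => Xᵀ j) := by
  set N := A - μ • (1 : Matrix (Fin n) (Fin n) ℂ) with hN
  -- powers intertwine
  have hpow : ∀ m : ℕ, N ^ m * X = X * S ^ m := by
    intro m
    induction m with
    | zero => simp
    | succ m ih =>
      rw [pow_succ, pow_succ, Matrix.mul_assoc, hX, ← Matrix.mul_assoc, ih, Matrix.mul_assoc]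
  -- powers of strictly upper triangular vanish
  have hSpow : ∀ (m : ℕ) (a b : Fin k), (b : ℕ) < (a : ℕ) + m → (S ^ m) a b = 0 := by
    intro m
    induction m with
    | zero =>
      intro a b hab
      have hne : a ≠ b := by
        intro h; subst h; omega
      rw [pow_zero, Matrix.one_apply_ne hne]
    | succ m ih =>
      intro a b hab
      rw [pow_succ, Matrix.mul_apply]
      apply Finset.sum_eq_zero
      intro c _
      by_cases hc : (c : ℕ) < (a : ℕ) + m
      · rw [ih a c hc, zero_mul]
      · have : b ≤ c := by omega
        rw [hS c b this, mul_zero]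
  -- the (0, m) entry of S^m is nonzero
  have hdiag : ∀ (m : ℕ) (h : m < k), (S ^ m) ⟨0, hk⟩ ⟨m, h⟩ ≠ 0 := by
    intro m
    induction m with
    | zero =>
      intro h
      simp [Matrix.one_apply_eq]
    | succ m ih =>
      intro h
      have hm : m < k := Nat.lt_of_succ_lt h
      rw [pow_succ, Matrix.mul_apply]
      rw [Finset.sum_eq_single (⟨m, hm⟩ : Fin k)]
      · exact mul_ne_zero (ih hm) (hsd m h)
      · intro c _ hc
        have hcm : (c : ℕ) ≠ m := fun heq => hc (Fin.ext (by simp [heq]))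
        by_cases h1 : (c : ℕ) < m
        · rw [hSpow m ⟨0, hk⟩ c (show (c : ℕ) < 0 + m by omega), zero_mul]
        · have h2 : m + 1 ≤ (c : ℕ) := by omega
          rw [hS c ⟨m + 1, h⟩ (by rw [Fin.le_def]; exact h2), mul_zero]
      · intro habs
        exact absurd (Finset.mem_univ _) habs
  -- column identity
  have hcolS : ∀ (m : ℕ) (j : Fin k),
      (N ^ m).mulVec (Xᵀ j) = fun i => ∑ a, X i a * (S ^ m) a j := by
    intro m j
    funext i
    have : ((N ^ m * X) i j) = ((X * S ^ m) i j) := by rw [hpow]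
    rw [Matrix.mul_apply, Matrix.mul_apply] at this
    simpa [Matrix.mulVec, dotProduct, Matrix.transpose_apply] using this
  have hNx : ∀ j : Fin k,
      (N ^ (j : ℕ)).mulVec (Xᵀ j) = (S ^ (j : ℕ)) ⟨0, hk⟩ j • Xᵀ ⟨0, hk⟩ := by
    intro j
    rw [hcolS]
    funext i
    rw [Finset.sum_eq_single (⟨0, hk⟩ : Fin k)]
    · simp [mul_comm]
    · intro a _ ha
      have ha0 : 0 < (a : ℕ) := by
        rcases Nat.eq_zero_or_pos (a : ℕ) with h0 | h0
        · exact absurd (Fin.ext h0) ha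
        · exact h0
      rw [hSpow _ a j (by omega), mul_zero]
    · intro habs
      exact absurd (Finset.mem_univ _) habs
  have hdiagj : ∀ j : Fin k, (S ^ (j : ℕ)) ⟨0, hk⟩ j ≠ 0 := by
    intro j
    have := hdiag (j : ℕ) j.isLt
    simpa using this
  have hzero : ∀ (i j : Fin k), (i : ℕ) < (j : ℕ) → (N ^ (j : ℕ)).mulVec (Xᵀ i) = 0 := by
    intro i j hij
    rw [hcolS]
    funext l
    simp only [Pi.zero_apply]
    apply Finset.sum_eq_zero
    intro a _
    rw [hSpow _ a i (by omega), mul_zero]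
  have hmain : ∀ j : Fin k, (N ^ (j : ℕ)).mulVec (Xᵀ j) ≠ 0 := by
    intro j h
    rw [hNx j] at h
    rcases smul_eq_zero.mp h with h1 | h1
    · exact hdiagj j h1
    · exact hx1 h1
  constructor
  · intro j hmem
    rw [LinearMap.mem_ker, Matrix.mulVecLin_apply] at hmem
    exact hmain j hmem
  · rw [Fintype.linearIndependent_iff]
    intro g hg
    by_contra hcon
    push_neg at hcon
    obtain ⟨j, hj⟩ := hcon
    set T := Finset.univ.filter (fun j : Fin k => g j ≠ 0) with hT
    have hTne : T.Nonempty := ⟨j, by simp [hT, hj]⟩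
    set j₀ := T.max' hTne with hj₀
    have hj₀mem : j₀ ∈ T := T.max'_mem hTne
    have hgj₀ : g j₀ ≠ 0 := by simpa [hT] using hj₀mem
    have happ := congrArg ((N ^ (j₀ : ℕ)).mulVecLin) hg
    simp only [map_sum, _root_.map_smul, Matrix.mulVecLin_apply, map_zero] at happ
    have hsum : ∑ i, g i • (N ^ (j₀ : ℕ)).mulVec (Xᵀ i) = 0 := happ
    rw [Finset.sum_eq_single j₀] at hsum
    · rcases smul_eq_zero.mp hsum with h1 | h1
      · exact hgj₀ h1
      · exact hmain j₀ h1
    · intro i _ hi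
      rcases lt_trichotomy i j₀ with h1 | h1 | h1
      · rw [hzero i j₀ h1, smul_zero]
      · exact absurd h1 hi
      · have : g i = 0 := by
          by_contra hgi
          have : i ∈ T := by simp [hT, hgi]
          exact absurd (T.le_max' i this) (not_le.mpr h1)
        rw [this, zero_smul]
    · intro habs
      exact absurd (Finset.mem_univ _) habs
end

section
/- Let A ∈ ℂ^{n×n}, λ* ∈ ℂ, S ∈ ℂ^{k×k} strictly upper triangular, and suppose X, Y ∈ ℂ^{n×k} and σ ∈ ℂ satisfy (A − λ*I)X = X S and −σX + (A − λ*I)Y − Y S = 0. Then (A − λ*I)^k Y = Y S^k + k σ X S^{k−1}. -/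
open Matrix

/-- If `(A - μI) X = X S` with `S ∈ ℂ^{k×k}` strictly upper triangular and
`-σX + (A - μI)Y - YS = 0`, then `(A - μI)^k Y = Y S^k + k σ (X S^{k-1})`. -/
theorem pow_mul_eq_of_intertwine
    (n k : ℕ) (hk : 1 ≤ k) (A : Matrix (Fin n) (Fin n) ℂ) (μ σ : ℂ)
    (S : Matrix (Fin k) (Fin k) ℂ)
    (hS : ∀ i j : Fin k, j ≤ i → S i j = 0)
    (X Y : Matrix (Fin n) (Fin k) ℂ)
    (hX : (A - μ • 1) * X = X * S)
    (hY : -(σ • X) + (A - μ • 1) * Y - Y * S = 0) :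
    (A - μ • 1) ^ k * Y = Y * S ^ k + ((k : ℂ) * σ) • (X * S ^ (k - 1)) := by
  set B := A - μ • (1 : Matrix (Fin n) (Fin n) ℂ) with hB
  have hY1 : B * Y = Y * S + σ • X := by
    have := hY
    linear_combination (norm := (simp [hB]; abel)) hY
  suffices h : ∀ m : ℕ, B ^ (m + 1) * Y = Y * S ^ (m + 1) + (((m : ℂ) + 1) * σ) • (X * S ^ m) by
    obtain ⟨m, rfl⟩ := Nat.exists_eq_add_of_le hk
    simpa [add_comm 1 m] using h m
  intro m
  induction m with
  | zero => simpa using hY1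
  | succ m ih =>
    have : B ^ (m + 2) * Y = B * (B ^ (m + 1) * Y) := by
      rw [← Matrix.mul_assoc, ← pow_succ']
    rw [this, ih]
    rw [Matrix.mul_add, ← Matrix.mul_assoc, hY1, Matrix.mul_smul, ← Matrix.mul_assoc, hX]
    push_cast
    simp only [Matrix.add_mul, Matrix.smul_mul, Matrix.mul_assoc, ← pow_succ', ← pow_succ]
    module
end

section
/- Let A ∈ ℂ^{n×n} and let λ* be an eigenvalue whose smallest Jordan block has size k. Let S ∈ ℂ^{k×k} be strictly upper triangular with nonzero first superdiagonal entries s_{12}·s_{23}⋯s_{k−1,k} ≠ 0, and let X ∈ ℂ^{n×k} with (A − λ*I)X = X S whose first column x₁ is an eigenvector not in range((A − λ*I)^k). If σ ∈ ℂ and Y ∈ ℂ^{n×k} satisfy −σX + (A − λ*I)Y − Y S = 0, then σ = 0. -/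
open Matrix

/-- Let `μ` be an eigenvalue of `A`, `S` strictly upper triangular with all
first-superdiagonal entries nonzero, and `(A - μI) X = X S` where the first column `x₁`
of `X` is an eigenvector not contained in `range ((A - μI)^k)`. If
`-σX + (A - μI)Y - YS = 0`, then `σ = 0`. -/
theorem sigma_eq_zero_of_first_column_not_mem_range
    (n k : ℕ) (hk : 0 < k) (A : Matrix (Fin n) (Fin n) ℂ) (μ σ : ℂ)
    (S : Matrix (Fin k) (Fin k) ℂ)
    (hS : ∀ i j : Fin k, j ≤ i → S i j = 0)
    (hsd : ∀ (j : ℕ) (h : j + 1 < k), S ⟨j, Nat.lt_of_succ_lt h⟩ ⟨j + 1, h⟩ ≠ 0)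
    (X Y : Matrix (Fin n) (Fin k) ℂ)
    (hX : (A - μ • 1) * X = X * S)
    (hx1eig : (A - μ • 1).mulVec (Xᵀ ⟨0, hk⟩) = 0)
    (hx1 : Xᵀ ⟨0, hk⟩ ∉ LinearMap.range (((A - μ • 1) ^ k).mulVecLin))
    (hY : -(σ • X) + (A - μ • 1) * Y - Y * S = 0) :
    σ = 0 := by
  set B := A - μ • (1 : Matrix (Fin n) (Fin n) ℂ) with hBdef
  have hBY : B * Y = Y * S + σ • X := by
    have h : B * Y - (Y * S + σ • X) = 0 := by rw [← hY]; abel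
    exact sub_eq_zero.mp h
  -- power identity
  have key : ∀ m : ℕ, B ^ (m + 1) * Y
      = Y * S ^ (m + 1) + (((m : ℂ) + 1) * σ) • (X * S ^ m) := by
    intro m
    induction m with
    | zero => simpa using hBY
    | succ m ih =>
      have step : B ^ (m + 2) * Y = B * (B ^ (m + 1) * Y) := by
        rw [pow_succ']; exact Matrix.mul_assoc B (B ^ (m + 1)) Y
      rw [step, ih, Matrix.mul_add, Matrix.mul_smul, ← Matrix.mul_assoc B Y, hBY,
        ← Matrix.mul_assoc B X, hX, Matrix.add_mul, Matrix.smul_mul,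
        Matrix.mul_assoc Y S, ← pow_succ', Matrix.mul_assoc X S, ← pow_succ']
      push_cast
      module
  -- vanishing below the m-th superdiagonal
  have hvan : ∀ m (i j : Fin k), (j : ℕ) < (i : ℕ) + m → (S ^ m) i j = 0 := by
    intro m
    induction m with
    | zero =>
      intro i j h
      rw [pow_zero]
      exact Matrix.one_apply_ne (Fin.ne_of_val_ne (by omega))
    | succ m ih =>
      intro i j h
      rw [pow_succ, Matrix.mul_apply]
      apply Finset.sum_eq_zero
      intro l _
      by_cases hl : (l : ℕ) < (i : ℕ) + m
      · rw [ih i l hl, zero_mul]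
      · rw [hS l j (Fin.le_def.mpr (by omega)), mul_zero]
  have hSk : S ^ k = 0 := by
    ext i j
    have := hvan k i j (by omega)
    simpa using this
  have hkm : k - 1 < k := Nat.sub_lt hk one_pos
  -- the corner entry of S^m is nonzero
  have hdiag : ∀ m (h : m < k), (S ^ m) ⟨0, hk⟩ ⟨m, h⟩ ≠ 0 := by
    intro m
    induction m with
    | zero =>
      intro h
      rw [pow_zero]
      simp [Matrix.one_apply]
    | succ m ih =>
      intro h
      have hm : m < k := Nat.lt_of_succ_lt h
      rw [pow_succ, Matrix.mul_apply, Finset.sum_eq_single (⟨m, hm⟩ : Fin k)]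
      · exact mul_ne_zero (ih hm) (hsd m h)
      · intro l _ hl
        have hne : (l : ℕ) ≠ m := fun e => hl (Fin.ext e)
        by_cases hlt : (l : ℕ) < m
        · rw [hvan m ⟨0, hk⟩ l (by simpa), zero_mul]
        · rw [hS l ⟨m + 1, h⟩ (Fin.le_def.mpr (by simp; omega)), mul_zero]
      · intro hmem; exact absurd (Finset.mem_univ _) hmem
  set j : Fin k := ⟨k - 1, Nat.sub_lt hk one_pos⟩ with hj
  set c : ℂ := (S ^ (k - 1)) ⟨0, hk⟩ j with hc
  have hcne : c ≠ 0 := hdiag (k - 1) (Nat.sub_lt hk one_pos)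
  -- column j of X * S^(k-1)
  have hXcol : ∀ r, (X * S ^ (k - 1)) r j = X r ⟨0, hk⟩ * c := by
    intro r
    rw [Matrix.mul_apply, Finset.sum_eq_single (⟨0, hk⟩ : Fin k)
      (fun l _ hl => by
        have hne : (l : ℕ) ≠ 0 := fun e => hl (Fin.ext e)
        rw [hvan (k - 1) l j (by simp [hj]; omega), mul_zero])
      (fun h => absurd (Finset.mem_univ _) h)]
  have hk' : k - 1 + 1 = k := Nat.succ_pred_eq_of_pos hk
  have main := key (k - 1)
  rw [hk'] at main
  by_contra hσ
  apply hx1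
  set c' : ℂ := (((k - 1 : ℕ) : ℂ) + 1) * σ * c with hc'
  have hc'ne : c' ≠ 0 := by
    apply mul_ne_zero (mul_ne_zero ?_ hσ) hcne
    have : (((k - 1 : ℕ) : ℂ) + 1) = ((k : ℕ) : ℂ) := by
      exact_mod_cast hk'
    rw [this]
    exact_mod_cast hk.ne'
  have hcol : (B ^ k).mulVec (fun l => Y l j) = c' • Xᵀ ⟨0, hk⟩ := by
    funext r
    have := congrArg (fun M : Matrix (Fin n) (Fin k) ℂ => M r j) main
    simp only [Matrix.mul_apply, Matrix.add_apply, Matrix.smul_apply, smul_eq_mul] at this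
    rw [Matrix.mulVec]
    simp only [dotProduct]
    rw [show (∑ l, (B ^ k) r l * Y l j) = ∑ l, (B ^ k) r l * Y l j from rfl]
    rw [← Matrix.mul_apply, main]
    simp only [hSk, Matrix.mul_zero, Matrix.add_apply, Matrix.zero_apply, zero_add,
      Matrix.smul_apply, smul_eq_mul, hXcol r]
    simp only [Pi.smul_apply, smul_eq_mul, Matrix.transpose_apply, hc']
    ring
  refine ⟨c'⁻¹ • (fun l => Y l j), ?_⟩
  rw [LinearMap.map_smul, Matrix.mulVecLin_apply, hcol, smul_smul, inv_mul_cancel₀ hc'ne, one_smul]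
end

section
/- Let A ∈ ℂ^{n×n} and λ* an eigenvalue with geometric multiplicity m and smallest Jordan block size k. Suppose C ∈ ℂ^{n×m} is such that C*N is invertible, where the columns of N span ker(A − λ*I), and S ∈ ℂ^{k×k} is strictly upper triangular with nonzero first superdiagonal. Then there exists X ∈ ℂ^{n×k} satisfying (A − λ*I)X = XS and C*X = T, where T ∈ ℂ^{m×k} has a 1 in entry (1,1) and zeros elsewhere, and this X is unique. -/
open Matrix

private lemma pow_mulVec_zero_of_le' {n : ℕ} (B : Matrix (Fin n) (Fin n) ℂ)
    {a b : ℕ} (hab : a ≤ b) {v : Fin n → ℂ} (hv : (B ^ a).mulVec v = 0) :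
    (B ^ b).mulVec v = 0 := by
  obtain ⟨c, rfl⟩ := Nat.exists_eq_add_of_le hab
  rw [add_comm, pow_add, ← mulVec_mulVec, hv, mulVec_zero]

set_option maxHeartbeats 800000 in
set_option synthInstance.maxHeartbeats 400000 in
private lemma aux_step' {n : ℕ} (B : Matrix (Fin n) (Fin n) ℂ) (m j : ℕ)
    (h1 : Module.finrank ℂ (LinearMap.ker ((B ^ j).mulVecLin)) = j * m)
    (h2 : Module.finrank ℂ (LinearMap.ker ((B ^ (j+1)).mulVecLin)) = (j+1) * m)
    (hgm : Module.finrank ℂ (LinearMap.ker B.mulVecLin) = m)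
    (v : Fin n → ℂ) (hv : (B ^ j).mulVec v = 0) :
    ∃ u, (B ^ (j+1)).mulVec u = 0 ∧ B.mulVec u = v := by
  set K1 := LinearMap.ker ((B ^ (j+1)).mulVecLin) with hK1
  set K0 := LinearMap.ker ((B ^ j).mulVecLin) with hK0
  set φ : K1 →ₗ[ℂ] (Fin n → ℂ) := B.mulVecLin ∘ₗ K1.subtype with hφ
  have hker_le : LinearMap.ker B.mulVecLin ≤ K1 := by
    intro x hx
    simp only [hK1, LinearMap.mem_ker, mulVecLin_apply] at hx ⊢
    rw [pow_succ, ← mulVec_mulVec, hx, mulVec_zero]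
  have hrange_le : LinearMap.range φ ≤ K0 := by
    rintro _ ⟨⟨x, hx⟩, rfl⟩
    simp only [hK1, LinearMap.mem_ker, mulVecLin_apply] at hx
    simp only [hφ, hK0, LinearMap.mem_ker, LinearMap.comp_apply, mulVecLin_apply,
      Submodule.subtype_apply]
    rw [mulVec_mulVec, ← pow_succ]; exact hx
  have hkerφ : LinearMap.ker φ = (LinearMap.ker B.mulVecLin).comap K1.subtype :=
    LinearMap.ker_comp _ _
  have hfin_ker : Module.finrank ℂ (LinearMap.ker φ) = m := by
    rw [hkerφ, LinearEquiv.finrank_eq (Submodule.comapSubtypeEquivOfLe hker_le), hgm]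
  have hfin_range : Module.finrank ℂ (LinearMap.range φ) = j * m := by
    have h3 := LinearMap.finrank_range_add_finrank_ker φ
    rw [hfin_ker] at h3
    have hK1fin : Module.finrank ℂ K1 = (j+1) * m := h2
    rw [hK1fin, add_mul, one_mul] at h3
    omega
  have hrange_eq : LinearMap.range φ = K0 := by
    apply Submodule.eq_of_le_of_finrank_le hrange_le
    rw [hfin_range]; exact le_of_eq h1
  have hvK0 : v ∈ K0 := by
    simp only [hK0, LinearMap.mem_ker, mulVecLin_apply]; exact hv
  rw [← hrange_eq] at hvK0
  obtain ⟨⟨u, hu⟩, huv⟩ := hvK0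
  refine ⟨u, ?_, ?_⟩
  · simpa only [hK1, LinearMap.mem_ker, mulVecLin_apply] using hu
  · simpa only [hφ, LinearMap.comp_apply, mulVecLin_apply, Submodule.subtype_apply] using huv

/-- Let `μ` be an eigenvalue of `A` with geometric multiplicity `m` and
smallest Jordan block size (Segre anchor) `k`, encoded via the Weyr characteristic. Let
the columns of `N` span `ker (A - μI)`, let `C` be such that `Cᴴ N` is invertible, and
let `S` be strictly upper triangular with nonzero first superdiagonal. Then there is a
unique `X` with `(A - μI) X = X S` and `Cᴴ X = T`, where `T` has a `1` in entry `(1,1)`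
and zeros elsewhere. -/
theorem existsUnique_solution
    (n k m : ℕ) (hm : 0 < m) (hk : 0 < k)
    (A : Matrix (Fin n) (Fin n) ℂ) (μ : ℂ)
    (hgm : Module.finrank ℂ (LinearMap.ker (A - μ • 1).mulVecLin) = m)
    (hW : ∀ j ≤ k, Module.finrank ℂ (LinearMap.ker (((A - μ • 1) ^ j).mulVecLin)) = j * m)
    (hanchor : Module.finrank ℂ
        (LinearMap.ker (((A - μ • 1) ^ (k + 1)).mulVecLin)) < (k + 1) * m)
    (N : Matrix (Fin n) (Fin m) ℂ)
    (hN : LinearMap.range N.mulVecLin = LinearMap.ker (A - μ • 1).mulVecLin)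
    (C : Matrix (Fin n) (Fin m) ℂ) (hC : IsUnit (Cᴴ * N))
    (S : Matrix (Fin k) (Fin k) ℂ)
    (hS : ∀ i j : Fin k, j ≤ i → S i j = 0)
    (hsd : ∀ (j : ℕ) (h : j + 1 < k), S ⟨j, Nat.lt_of_succ_lt h⟩ ⟨j + 1, h⟩ ≠ 0)
    (T : Matrix (Fin m) (Fin k) ℂ)
    (hT : T = Matrix.of fun (i : Fin m) (j : Fin k) => if (i : ℕ) = 0 ∧ (j : ℕ) = 0 then (1 : ℂ) else 0) :
    ∃! X : Matrix (Fin n) (Fin k) ℂ, (A - μ • 1) * X = X * S ∧ Cᴴ * X = T := by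
  set B := A - μ • (1 : Matrix (Fin n) (Fin n) ℂ) with hBdef
  have hdet : IsUnit (Cᴴ * N).det := (Matrix.isUnit_iff_isUnit_det _).mp hC
  have hmulinv : (Cᴴ * N) * (Cᴴ * N)⁻¹ = 1 := Matrix.mul_nonsing_inv _ hdet
  have hinvmul : (Cᴴ * N)⁻¹ * (Cᴴ * N) = 1 := Matrix.nonsing_inv_mul _ hdet
  have hCN : ∀ z : Fin m → ℂ, Cᴴ.mulVec (N.mulVec ((Cᴴ * N)⁻¹.mulVec z)) = z := by
    intro z
    rw [mulVec_mulVec, mulVec_mulVec, hmulinv, one_mulVec]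
  have hNker : ∀ w : Fin m → ℂ, B.mulVec (N.mulVec w) = 0 := by
    intro w
    have : N.mulVec w ∈ LinearMap.range N.mulVecLin := ⟨w, rfl⟩
    rw [hN] at this
    simpa only [LinearMap.mem_ker, mulVecLin_apply] using this
  have uniq0 : ∀ z : Fin n → ℂ, B.mulVec z = 0 → Cᴴ.mulVec z = 0 → z = 0 := by
    intro z hBz hCz
    have hz : z ∈ LinearMap.range N.mulVecLin := by
      rw [hN]; simpa only [LinearMap.mem_ker, mulVecLin_apply] using hBz
    obtain ⟨w, hw⟩ := hz
    simp only [mulVecLin_apply] at hw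
    have h1 : (Cᴴ * N).mulVec w = 0 := by rw [← mulVec_mulVec, hw, hCz]
    have h2 : w = 0 := by
      have := congrArg ((Cᴴ * N)⁻¹.mulVec ·) h1
      simpa [mulVec_mulVec, hinvmul, one_mulVec] using this
    rw [← hw, h2, mulVec_zero]
  -- the scalar extension of S and the target columns
  set s : ℕ → ℕ → ℂ := fun l i => if h : l < k ∧ i < k then S ⟨l, h.1⟩ ⟨i, h.2⟩ else 0 with hsdef
  set t : ℕ → (Fin m → ℂ) := fun i => fun r => if (r : ℕ) = 0 ∧ i = 0 then 1 else 0 with htdef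
  have aux : ∀ j < k, ∀ v : Fin n → ℂ, (B ^ j).mulVec v = 0 →
      ∃ u, (B ^ (j+1)).mulVec u = 0 ∧ B.mulVec u = v := by
    intro j hj v hv
    exact aux_step' B m j (hW j (le_of_lt hj)) (hW (j+1) hj) hgm v hv
  -- existence of the columns, by induction
  have key : ∀ j ≤ k, ∃ x : ℕ → (Fin n → ℂ), ∀ i < j,
      (B ^ (i+1)).mulVec (x i) = 0 ∧
      B.mulVec (x i) = ∑ l ∈ Finset.range i, s l i • x l ∧
      Cᴴ.mulVec (x i) = t i := by
    intro j
    induction j with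
    | zero => exact fun _ => ⟨fun _ => 0, fun i hi => absurd hi (Nat.not_lt_zero i)⟩
    | succ j ih =>
      intro hj1
      obtain ⟨x, hx⟩ := ih (Nat.le_of_succ_le hj1)
      set v := ∑ l ∈ Finset.range j, s l j • x l with hvdef
      have hv : (B ^ j).mulVec v = 0 := by
        have : (B ^ j).mulVec v = ∑ l ∈ Finset.range j, s l j • (B ^ j).mulVec (x l) := by
          rw [← mulVecLin_apply, hvdef, map_sum]
          simp only [_root_.map_smul, mulVecLin_apply]
        rw [this]
        apply Finset.sum_eq_zero
        intro l hl
        rw [pow_mulVec_zero_of_le' B (Finset.mem_range.mp hl)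
          (hx l (Finset.mem_range.mp hl)).1, smul_zero]
      obtain ⟨u0, hu0a, hu0b⟩ := aux j (Nat.lt_of_succ_le hj1) v hv
      set w := (Cᴴ * N)⁻¹.mulVec (t j - Cᴴ.mulVec u0) with hwdef
      set u := u0 + N.mulVec w with hudef
      have hBu : B.mulVec u = v := by
        rw [hudef, mulVec_add, hNker, add_zero, hu0b]
      have hpow : (B ^ (j+1)).mulVec u = 0 := by
        rw [hudef, mulVec_add, hu0a, zero_add]
        apply pow_mulVec_zero_of_le' B (Nat.le_add_left 1 j)
        rw [pow_one]; exact hNker w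
      have hCu : Cᴴ.mulVec u = t j := by
        rw [hudef, mulVec_add, hwdef, hCN, add_sub_cancel]
      refine ⟨Function.update x j u, fun i hi => ?_⟩
      have hupd : ∀ l < j, Function.update x j u l = x l := fun l hl =>
        Function.update_of_ne (Nat.ne_of_lt hl) u x
      rcases Nat.lt_succ_iff_lt_or_eq.mp hi with hij | rfl
      · obtain ⟨h1, h2, h3⟩ := hx i hij
        rw [hupd i hij]
        refine ⟨h1, ?_, h3⟩
        rw [h2]
        exact (Finset.sum_congr rfl fun l hl => by
          rw [hupd l (lt_trans (Finset.mem_range.mp hl) hij)]).symm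
      · rw [Function.update_self]
        refine ⟨hpow, ?_, hCu⟩
        rw [hBu, hvdef]
        exact Finset.sum_congr rfl fun l hl => by rw [hupd l (Finset.mem_range.mp hl)]
  obtain ⟨x, hx⟩ := key k le_rfl
  -- bridge between range sums and Fin sums
  have bridge : ∀ c : Fin k,
      ∑ l ∈ Finset.range (c : ℕ), s l (c : ℕ) • x l = ∑ l : Fin k, S l c • x (l : ℕ) := by
    intro c
    have h1 : ∑ l : Fin k, S l c • x (l : ℕ) = ∑ l : Fin k, s (l : ℕ) (c : ℕ) • x (l : ℕ) := by
      apply Finset.sum_congr rfl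
      intro l _
      rw [hsdef]
      simp only [l.isLt, c.isLt, and_self, dif_pos, Fin.eta]
    rw [h1, Fin.sum_univ_eq_sum_range (fun l => s l (c : ℕ) • x l) k]
    apply Finset.sum_subset (Finset.range_subset_range.mpr (le_of_lt c.isLt)) ?_
    intro l hlk hlc
    have hlk' := Finset.mem_range.mp hlk
    have hlc' : (c : ℕ) ≤ l := le_of_not_gt (fun h => hlc (Finset.mem_range.mpr h))
    rw [hsdef]
    simp only [hlk', c.isLt, and_self, dif_pos]
    rw [hS ⟨l, hlk'⟩ c hlc', zero_smul]
  set X : Matrix (Fin n) (Fin k) ℂ := Matrix.of fun r (c : Fin k) => x (c : ℕ) r with hXdef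
  have hcol : ∀ c : Fin k, (fun l => X l c) = x (c : ℕ) := fun c => rfl
  have hXeq1 : B * X = X * S := by
    ext r c
    have hb := (hx (c : ℕ) c.isLt).2.1
    rw [bridge c] at hb
    have := congrFun hb r
    simp only [Matrix.mul_apply, hXdef, Matrix.of_apply]
    simp only [mulVec, dotProduct, Finset.sum_apply, Pi.smul_apply, smul_eq_mul] at this
    rw [this]
    apply Finset.sum_congr rfl
    intro l _
    ring
  have hXeq2 : Cᴴ * X = T := by
    ext r c
    have hb := (hx (c : ℕ) c.isLt).2.2
    have := congrFun hb r
    simp only [Matrix.mul_apply, hXdef, Matrix.of_apply, hT]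
    simp only [mulVec, dotProduct, htdef] at this
    rw [this]
  refine ⟨X, ⟨hXeq1, hXeq2⟩, ?_⟩
  -- uniqueness
  rintro Y ⟨hY1, hY2⟩
  have hZ1 : B * (Y - X) = (Y - X) * S := by
    rw [Matrix.mul_sub, hY1, hXeq1, ← Matrix.sub_mul]
  have hZ2 : Cᴴ * (Y - X) = 0 := by
    rw [Matrix.mul_sub, hY2, hXeq2, sub_self]
  set Z := Y - X with hZdef
  have colzero : ∀ j : ℕ, ∀ hj : j < k, ∀ r, Z r ⟨j, hj⟩ = 0 := by
    intro j
    induction j using Nat.strong_induction_on with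
    | _ j ih =>
      intro hj
      set z : Fin n → ℂ := fun r => Z r ⟨j, hj⟩ with hzdef
      have hBz : B.mulVec z = 0 := by
        funext r
        have h := congrFun (congrFun hZ1 r) ⟨j, hj⟩
        simp only [Matrix.mul_apply] at h
        have hrhs : ∑ l : Fin k, Z r l * S l ⟨j, hj⟩ = 0 := by
          apply Finset.sum_eq_zero
          intro l _
          by_cases hl : (l : ℕ) < j
          · have := ih (l : ℕ) hl l.isLt r
            rw [Fin.eta] at this
            rw [this, zero_mul]
          · rw [hS l ⟨j, hj⟩ (le_of_not_gt hl), mul_zero]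
        rw [hrhs] at h
        simpa only [mulVec, dotProduct, Pi.zero_apply, hzdef] using h
      have hCz : Cᴴ.mulVec z = 0 := by
        funext r
        have h := congrFun (congrFun hZ2 r) ⟨j, hj⟩
        simp only [Matrix.mul_apply, Matrix.zero_apply] at h
        simpa only [mulVec, dotProduct, Pi.zero_apply, hzdef] using h
      intro r
      exact congrFun (uniq0 z hBz hCz) r
  have : Z = 0 := by
    ext r c
    have := colzero (c : ℕ) c.isLt r
    rwa [Fin.eta] at this
  rw [hZdef] at this
  exact sub_eq_zero.mp this
end

section
/- Let Ǎ ∈ ℂ^{n×n}, λ̌ ∈ ℂ, S ∈ ℂ^{k×k} nilpotent of rank k−1, and let X̌ ∈ ℂ^{n×k} have full column rank. Define E = (Ǎ − λ̌I)X̌ − X̌S. Then λ̌ is an exact eigenvalue of the matrix Ǎ − E X̌† and it has a Jordan block of size at least k; moreover if X̌ has orthonormal columns then the backward perturbation satisfies ‖E X̌†‖_F ≤ ‖E‖_F. -/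
/-!
Put `B = Ǎ - E X† - λ̌ I`. Since `X† X = I`, the definition of `E` collapses to `B X = X S`, hence
`Bʲ X = X Sʲ`. A `k × k` matrix of rank `k - 1` has a one-dimensional kernel, and
`dim ker Sʲ ≤ j · dim ker S` forces `S^(k-1) ≠ 0`, while `S^k = 0` by nilpotency. For `v` with
`S^(k-1) v ≠ 0`, the vector `X v` lies in `ker B^k` but, `X` being injective, not in `ker B^(k-1)`;
in particular `B` is singular. If `Xᴴ X = I` then `(E Xᴴ)(E Xᴴ)ᴴ = E Eᴴ`, so the two Frobenius
norms even coincide.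
-/

namespace LinearMap

variable {K V W U : Type*} [Field K] [AddCommGroup V] [Module K V] [FiniteDimensional K V]
  [AddCommGroup W] [Module K W] [FiniteDimensional K W] [AddCommGroup U] [Module K U]

theorem finrank_ker_comp_le (f : V →ₗ[K] W) (g : W →ₗ[K] U) :
    Module.finrank K (ker (g ∘ₗ f)) ≤ Module.finrank K (ker g) + Module.finrank K (ker f) := by
  set p := ker (g ∘ₗ f)
  have hrange : Module.finrank K (range (f.domRestrict p)) ≤ Module.finrank K (ker g) := by
    apply Submodule.finrank_mono
    rw [range_domRestrict]
    exact Submodule.map_le_iff_le_comap.mpr (ker_comp f g).le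
  have hker : Module.finrank K (ker (f.domRestrict p)) ≤ Module.finrank K (ker f) := by
    rw [ker_domRestrict, ← Submodule.finrank_map_subtype_eq]
    apply Submodule.finrank_mono
    rw [Submodule.map_comap_subtype]
    exact inf_le_right
  have := finrank_range_add_finrank_ker (f.domRestrict p)
  omega

theorem finrank_ker_pow_le (f : Module.End K V) (m : ℕ) :
    Module.finrank K (ker (f ^ m)) ≤ m * Module.finrank K (ker f) := by
  induction m with
  | zero => simp [Module.End.one_eq_id]
  | succ m ih =>
    have := finrank_ker_comp_le f (f ^ m)
    rw [pow_succ, Module.End.mul_eq_comp, Nat.succ_mul]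
    omega

end LinearMap

namespace Matrix

section

variable {K ι m : Type*} [Field K] [Fintype ι] [Fintype m] [DecidableEq m]

theorem mulVecLin_pow [DecidableEq ι] (S : Matrix ι ι K) (j : ℕ) :
    (S ^ j).mulVecLin = S.mulVecLin ^ j :=
  map_pow Matrix.toLinAlgEquiv' S j

theorem finrank_ker_mulVecLin_of_rank_eq {S : Matrix ι ι K} (hS : S.rank = Fintype.card ι - 1)
    [Nonempty ι] : Module.finrank K (LinearMap.ker S.mulVecLin) = 1 := by
  have h := LinearMap.finrank_range_add_finrank_ker S.mulVecLin
  rw [Module.finrank_fintype_fun_eq_card] at h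
  change S.rank + _ = _ at h
  have : 0 < Fintype.card ι := Fintype.card_pos
  omega

theorem pow_card_sub_one_ne_zero_of_rank_eq [Nonempty ι] [DecidableEq ι] {S : Matrix ι ι K}
    (hS : S.rank = Fintype.card ι - 1) : S ^ (Fintype.card ι - 1) ≠ 0 := by
  intro h
  have hle := LinearMap.finrank_ker_pow_le S.mulVecLin (Fintype.card ι - 1)
  rw [← mulVecLin_pow, h, mulVecLin_zero, LinearMap.ker_zero, finrank_top,
    Module.finrank_fintype_fun_eq_card, finrank_ker_mulVecLin_of_rank_eq hS] at hle
  have : 0 < Fintype.card ι := Fintype.card_pos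
  omega

theorem IsNilpotent.pow_card_eq_zero [DecidableEq ι] {S : Matrix ι ι K} (hS : IsNilpotent S) :
    S ^ Fintype.card ι = 0 := by
  have hchar : S.charpoly = Polynomial.X ^ Fintype.card ι :=
    sub_eq_zero.mp (isNilpotent_charpoly_sub_pow_of_isNilpotent hS).eq_zero
  simpa [hchar] using aeval_self_charpoly S

theorem pow_mul_eq_mul_pow_of_mul_eq {B : Matrix m m K} {X : Matrix m ι K} {S : Matrix ι ι K}
    [DecidableEq ι] (h : B * X = X * S) (j : ℕ) : B ^ j * X = X * S ^ j := by
  induction j with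
  | zero => simp
  | succ j ih => rw [pow_succ', pow_succ', Matrix.mul_assoc, ih, ← Matrix.mul_assoc, h,
      Matrix.mul_assoc]

theorem ker_mulVecLin_pow_lt_of_mul_eq [DecidableEq ι] {B : Matrix m m K} {X : Matrix m ι K}
    {S : Matrix ι ι K} (hX : Function.Injective X.mulVecLin) (h : B * X = X * S) {j : ℕ}
    (hj : S ^ j ≠ 0) (hj' : S ^ (j + 1) = 0) :
    LinearMap.ker (B ^ j).mulVecLin < LinearMap.ker (B ^ (j + 1)).mulVecLin := by
  obtain ⟨v, hv⟩ : ∃ v, S ^ j *ᵥ v ≠ 0 := by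
    by_contra! hv
    exact hj (ext_iff_mulVec.mpr fun v => by rw [hv, zero_mulVec])
  have hmulVec (i : ℕ) : B ^ i *ᵥ (X *ᵥ v) = X *ᵥ (S ^ i *ᵥ v) := by
    rw [mulVec_mulVec, pow_mul_eq_mul_pow_of_mul_eq h, ← mulVec_mulVec]
  refine SetLike.lt_iff_le_and_exists.mpr ⟨?_, X *ᵥ v, ?_, ?_⟩
  · rw [pow_succ', mulVecLin_mul]
    exact LinearMap.ker_le_ker_comp _ _
  · simp [hmulVec, hj']
  · rw [LinearMap.mem_ker, mulVecLin_apply, hmulVec]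
    exact fun h0 => hv (hX (by simpa using h0))

theorem not_isUnit_of_ker_mulVecLin_pow_lt {B : Matrix m m K} {j : ℕ}
    (h : LinearMap.ker (B ^ j).mulVecLin < LinearMap.ker (B ^ (j + 1)).mulVecLin) :
    ¬IsUnit B := by
  intro hB
  have hinj : Function.Injective (B ^ (j + 1)).mulVecLin :=
    mulVec_injective_iff_isUnit.mpr (hB.pow _)
  rw [LinearMap.ker_eq_bot.mpr hinj] at h
  exact not_lt_bot h

theorem mem_spectrum_of_ker_mulVecLin_pow_lt {A : Matrix m m K} {μ : K} {j : ℕ}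
    (h : LinearMap.ker ((A - μ • 1) ^ j).mulVecLin <
      LinearMap.ker ((A - μ • 1) ^ (j + 1)).mulVecLin) : μ ∈ spectrum K A := by
  refine spectrum.mem_iff.mpr fun hA => not_isUnit_of_ker_mulVecLin_pow_lt h ?_
  simpa [Algebra.algebraMap_eq_smul_one] using hA.neg

end

section

variable {𝕜 m n p : Type*} [RCLike 𝕜] [Fintype m] [Fintype n] [Fintype p]

theorem sum_sum_norm_sq_eq_re_trace_mul_conjTranspose (M : Matrix m n 𝕜) :
    ∑ i, ∑ j, ‖M i j‖ ^ 2 = RCLike.re (M * Mᴴ).trace := by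
  simp only [trace, diag, mul_apply, conjTranspose_apply, RCLike.star_def, RCLike.mul_conj,
    map_sum, ← RCLike.ofReal_pow, RCLike.ofReal_re]

theorem sum_sum_norm_sq_mul_conjTranspose_of_orthonormal [DecidableEq n] (E : Matrix m n 𝕜)
    {X : Matrix p n 𝕜} (hX : Xᴴ * X = 1) :
    ∑ i, ∑ j, ‖(E * Xᴴ) i j‖ ^ 2 = ∑ i, ∑ j, ‖E i j‖ ^ 2 := by
  simp only [sum_sum_norm_sq_eq_re_trace_mul_conjTranspose, conjTranspose_mul,
    conjTranspose_conjTranspose, Matrix.mul_assoc, ← Matrix.mul_assoc Xᴴ, hX, Matrix.one_mul]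

end

end Matrix

open Matrix in
/-- Let `S` be nilpotent of rank `k-1`, `X` of full column rank with left
inverse `Xd = X†` (the Moore–Penrose inverse), and `E = (Ǎ - μI)X - XS`. Then `μ` is an
exact eigenvalue of `Ǎ - E X†` with a Jordan block of size at least `k`; moreover if `X`
has orthonormal columns (so `X† = Xᴴ`), the backward perturbation satisfies
`‖E Xᴴ‖_F ≤ ‖E‖_F`. -/
theorem backward_error_eigenvalue
    (n k : ℕ) (hk : 1 ≤ k) (Ac : Matrix (Fin n) (Fin n) ℂ) (μ : ℂ)
    (S : Matrix (Fin k) (Fin k) ℂ)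
    (hSnil : IsNilpotent S) (hSrank : S.rank = k - 1)
    (X : Matrix (Fin n) (Fin k) ℂ)
    (hXrank : Function.Injective X.mulVecLin)
    (Xd : Matrix (Fin k) (Fin n) ℂ) (hXd : Xd * X = 1)
    (E : Matrix (Fin n) (Fin k) ℂ)
    (hE : E = (Ac - μ • 1) * X - X * S) :
    μ ∈ spectrum ℂ (Ac - E * Xd) ∧
    LinearMap.ker (((Ac - E * Xd - μ • 1) ^ (k - 1)).mulVecLin) <
      LinearMap.ker (((Ac - E * Xd - μ • 1) ^ k).mulVecLin) ∧
    (Xᴴ * X = 1 →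
      Real.sqrt (∑ i, ∑ j, ‖(E * Xᴴ) i j‖ ^ 2) ≤ Real.sqrt (∑ i, ∑ j, ‖E i j‖ ^ 2)) := by
  obtain ⟨j, rfl⟩ : ∃ j, k = j + 1 := ⟨k - 1, by omega⟩
  have hBX : (Ac - E * Xd - μ • 1) * X = X * S := by
    rw [Matrix.sub_mul, Matrix.sub_mul, Matrix.mul_assoc E, hXd, Matrix.mul_one, hE,
      Matrix.sub_mul]
    abel
  have hSj : S ^ j ≠ 0 := by
    simpa using pow_card_sub_one_ne_zero_of_rank_eq (ι := Fin (j + 1)) (by simpa using hSrank)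
  have hSj' : S ^ (j + 1) = 0 := by simpa using hSnil.pow_card_eq_zero
  have hker := ker_mulVecLin_pow_lt_of_mul_eq hXrank hBX hSj hSj'
  exact ⟨mem_spectrum_of_ker_mulVecLin_pow_lt hker, by simpa using hker, fun hX =>
    Real.sqrt_le_sqrt (sum_sum_norm_sq_mul_conjTranspose_of_orthonormal E hX).le⟩
end

section
/- Let A ∈ ℂ^{n×n} and λ* an eigenvalue with geometric multiplicity m and smallest Jordan block size k, and suppose m' ≤ m and k' ≤ k. Then there exist C ∈ ℂ^{n×m'} and a strictly upper triangular S ∈ ℂ^{k'×k'} with nonzero first superdiagonal, and X ∈ ℂ^{n×k'}, such that (A − λ*I)X = XS and C*X = T, where T ∈ ℂ^{m'×k'} has 1 in entry (1,1) and 0 elsewhere. -/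
open Matrix

set_option synthInstance.maxHeartbeats 1000000 in
/-- If the kernels of `B^j` and `B^(j+1)` have ranks `j*m` and `(j+1)*m` where `m` is the
rank of `ker B`, then every element of `ker (B^j)` has a `B`-preimage in `ker (B^(j+1))`. -/
lemma aux_surj {n : ℕ} (B : Matrix (Fin n) (Fin n) ℂ) (m : ℕ)
    (hker : Module.finrank ℂ (LinearMap.ker B.mulVecLin) = m)
    (j : ℕ)
    (hj : Module.finrank ℂ (LinearMap.ker ((B ^ j).mulVecLin)) = j * m)
    (hj1 : Module.finrank ℂ (LinearMap.ker ((B ^ (j + 1)).mulVecLin)) = (j + 1) * m)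
    (v : Fin n → ℂ) (hv : v ∈ LinearMap.ker ((B ^ j).mulVecLin)) :
    ∃ w, w ∈ LinearMap.ker ((B ^ (j + 1)).mulVecLin) ∧ B.mulVec w = v := by
  classical
  set L := B.mulVecLin with hL
  set K1 := LinearMap.ker ((B ^ (j + 1)).mulVecLin) with hK1
  set Kj := LinearMap.ker ((B ^ j).mulVecLin) with hKj
  have hle : K1.map L ≤ Kj := by
    rintro _ ⟨u, hu, rfl⟩
    have hu' : (B ^ (j + 1)).mulVec u = 0 := hu
    have : (B ^ j).mulVec (B.mulVec u) = 0 := by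
      rw [Matrix.mulVec_mulVec, ← pow_succ]
      exact hu'
    simpa [hKj, hL, Matrix.mulVecLin_apply] using this
  have hkerle : LinearMap.ker L ≤ K1 := by
    intro u hu
    have hu' : B.mulVec u = 0 := hu
    have : (B ^ (j + 1)).mulVec u = 0 := by
      rw [pow_succ, ← Matrix.mulVec_mulVec, hu', Matrix.mulVec_zero]
    simpa [hK1, Matrix.mulVecLin_apply] using this
  -- rank-nullity on the restriction of L to K1
  have hrn := LinearMap.finrank_range_add_finrank_ker (L.domRestrict K1)
  rw [LinearMap.range_domRestrict, LinearMap.ker_domRestrict] at hrn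
  have hkerfin : Module.finrank ℂ ((LinearMap.ker L).comap K1.subtype) = m := by
    rw [LinearEquiv.finrank_eq (Submodule.comapSubtypeEquivOfLe hkerle)]
    exact hker
  have hK1fin : Module.finrank ℂ K1 = (j + 1) * m := hj1
  have hmapfin : Module.finrank ℂ (K1.map L) = j * m := by
    rw [hkerfin, hK1fin] at hrn
    have h2 : (j + 1) * m = j * m + m := by ring
    rw [h2] at hrn
    exact Nat.add_right_cancel hrn
  have heq : K1.map L = Kj := by
    apply Submodule.eq_of_le_of_finrank_le hle
    rw [hmapfin, hj]
  rw [← heq] at hv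
  obtain ⟨w, hw, hwv⟩ := hv
  exact ⟨w, hw, by simpa [hL, Matrix.mulVecLin_apply] using hwv⟩

/-- Existence of a Jordan chain of length `t+1` (indices `0..t`) when `t + 1 ≤ k`. -/
lemma aux_chain {n : ℕ} (B : Matrix (Fin n) (Fin n) ℂ) (m k : ℕ) (hm : 0 < m)
    (hker : Module.finrank ℂ (LinearMap.ker B.mulVecLin) = m)
    (hW : ∀ j ≤ k, Module.finrank ℂ (LinearMap.ker ((B ^ j).mulVecLin)) = j * m) :
    ∀ t, t + 1 ≤ k → ∃ x : ℕ → (Fin n → ℂ),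
      x 0 ≠ 0 ∧ B.mulVec (x 0) = 0 ∧ (∀ j ≤ t, (B ^ (j + 1)).mulVec (x j) = 0) ∧
      ∀ j < t, B.mulVec (x (j + 1)) = x j := by
  intro t
  induction t with
  | zero =>
    intro h1
    have hfin : Module.finrank ℂ (LinearMap.ker ((B ^ 1).mulVecLin)) = m := by
      simpa using hW 1 h1
    have hne : LinearMap.ker ((B ^ 1).mulVecLin) ≠ ⊥ := by
      intro hbot
      rw [hbot, finrank_bot] at hfin
      omega
    obtain ⟨v, hv, hv0⟩ := Submodule.exists_mem_ne_zero_of_ne_bot hne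
    refine ⟨fun _ => v, hv0, ?_, ?_, ?_⟩
    · have : (B ^ 1).mulVec v = 0 := hv
      simpa using this
    · intro j hj
      interval_cases j
      simpa [Matrix.mulVecLin_apply] using hv
    · intro j hj; omega
  | succ t ih =>
    intro h2
    obtain ⟨x, hx0, hxB0, hxk, hxc⟩ := ih (by omega)
    have hxt : x t ∈ LinearMap.ker ((B ^ (t + 1)).mulVecLin) := by
      simpa [Matrix.mulVecLin_apply] using hxk t le_rfl
    obtain ⟨w, hw, hwv⟩ := aux_surj B m hker (t + 1) (hW (t + 1) (by omega))
      (hW (t + 2) h2) (x t) hxt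
    refine ⟨Function.update x (t + 1) w, ?_, ?_, ?_, ?_⟩
    · simpa [Function.update_of_ne (by omega : (0 : ℕ) ≠ t + 1)] using hx0
    · simpa [Function.update_of_ne (by omega : (0 : ℕ) ≠ t + 1)] using hxB0
    · intro j hj
      rcases eq_or_lt_of_le hj with h | h
      · subst h
        have hw' : (B ^ (t + 1 + 1)).mulVec w = 0 := hw
        simpa [Function.update_self] using hw'
      · rw [Function.update_of_ne (by omega : j ≠ t + 1)]
        exact hxk j (by omega)
    · intro j hj
      rcases eq_or_lt_of_le (Nat.lt_succ_iff.mp hj) with h | h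
      · subst h
        rw [Function.update_self, Function.update_of_ne (by omega : j ≠ j + 1)]
        exact hwv
      · rw [Function.update_of_ne (by omega : j + 1 ≠ t + 1),
          Function.update_of_ne (by omega : j ≠ t + 1)]
        exact hxc j h

/-- Let `μ` be an eigenvalue of `A` with geometric multiplicity `m` and
Segre anchor `k` (Weyr-characteristic encoding), and let `m' ≤ m`, `k' ≤ k` with
`m', k' ≥ 1`. Then there exist `C ∈ ℂ^{n×m'}`, a strictly upper triangular
`S ∈ ℂ^{k'×k'}` with nonzero first superdiagonal, and `X ∈ ℂ^{n×k'}` such that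
`(A - μI)X = XS` and `CᴴX = T`, where `T` has `1` in entry `(1,1)` and `0` elsewhere. -/
theorem exists_solution_of_dominated_support
    (n k m k' m' : ℕ) (hm : 0 < m') (hk : 0 < k')
    (hm' : m' ≤ m) (hk' : k' ≤ k)
    (A : Matrix (Fin n) (Fin n) ℂ) (μ : ℂ)
    (hgm : Module.finrank ℂ (LinearMap.ker (A - μ • 1).mulVecLin) = m)
    (hW : ∀ j ≤ k, Module.finrank ℂ (LinearMap.ker (((A - μ • 1) ^ j).mulVecLin)) = j * m)
    (hanchor : Module.finrank ℂ
        (LinearMap.ker (((A - μ • 1) ^ (k + 1)).mulVecLin)) < (k + 1) * m) :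
    ∃ (C : Matrix (Fin n) (Fin m') ℂ) (S : Matrix (Fin k') (Fin k') ℂ)
      (X : Matrix (Fin n) (Fin k') ℂ),
      (∀ i j : Fin k', j ≤ i → S i j = 0) ∧
      (∀ (j : ℕ) (h : j + 1 < k'), S ⟨j, Nat.lt_of_succ_lt h⟩ ⟨j + 1, h⟩ ≠ 0) ∧
      (A - μ • 1) * X = X * S ∧
      Cᴴ * X = Matrix.of (fun (i : Fin m') (j : Fin k') =>
        if (i : ℕ) = 0 ∧ (j : ℕ) = 0 then (1 : ℂ) else 0) := by
  classical
  set B := A - μ • 1 with hB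
  have hm0 : 0 < m := lt_of_lt_of_le hm hm'
  obtain ⟨x, hx0, hxB0, hxk, hxc⟩ :=
    aux_chain B m k hm0 hgm hW (k' - 1) (by omega)
  -- powers acting on the chain
  have hpow : ∀ i j, j < k' →
      (B ^ i).mulVec (x j) = if i ≤ j then x (j - i) else 0 := by
    intro i
    induction i with
    | zero =>
      intro j hj
      simp
    | succ i ih =>
      intro j hj
      have : (B ^ (i + 1)).mulVec (x j) = B.mulVec ((B ^ i).mulVec (x j)) := by
        rw [pow_succ', ← Matrix.mulVec_mulVec]
      rw [this, ih j hj]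
      by_cases h1 : i + 1 ≤ j
      · have hij : i ≤ j := by omega
        rw [if_pos hij, if_pos h1]
        have hlt : j - (i + 1) < k' - 1 := by omega
        have := hxc (j - (i + 1)) hlt
        have heq : j - (i + 1) + 1 = j - i := by omega
        rw [heq] at this
        rw [this]
      · by_cases h2 : i ≤ j
        · have : j - i = 0 := by omega
          rw [if_pos h2, if_neg h1, this, hxB0]
        · rw [if_neg h2, if_neg h1, Matrix.mulVec_zero]
  -- the chain head is not in the span of the later chain vectors
  have hnm : x 0 ∉ Submodule.span ℂ
      (Set.range (fun i : Fin (k' - 1) => x ((i : ℕ) + 1))) := by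
    intro hmem
    rw [Submodule.mem_span_range_iff_exists_fun] at hmem
    obtain ⟨c, hc⟩ := hmem
    by_cases hT : ∀ i, c i = 0
    · apply hx0
      rw [← hc]
      simp [hT]
    · push_neg at hT
      obtain ⟨i0, hi0⟩ := hT
      set T := Finset.univ.filter (fun i : Fin (k' - 1) => c i ≠ 0) with hTdef
      have hTne : T.Nonempty := ⟨i0, by simp [hTdef, hi0]⟩
      set r := T.max' hTne with hrdef
      have hrT : c r ≠ 0 := (Finset.mem_filter.mp (T.max'_mem hTne)).2
      have hmax : ∀ i, c i ≠ 0 → i ≤ r :=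
        fun i hi => T.le_max' i (by simp [hTdef, hi])
      have happ := congrArg ((B ^ ((r : ℕ) + 1)).mulVecLin) hc
      rw [map_sum] at happ
      have hRHS : (B ^ ((r : ℕ) + 1)).mulVecLin (x 0) = 0 := by
        rw [Matrix.mulVecLin_apply, hpow ((r : ℕ) + 1) 0 hk, if_neg (by omega)]
      have hzero : ∀ i ∈ (Finset.univ : Finset (Fin (k' - 1))), i ≠ r →
          (B ^ ((r : ℕ) + 1)).mulVecLin (c i • x ((i : ℕ) + 1)) = 0 := by
        intro i _ hir
        by_cases hci : c i = 0
        · simp [hci]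
        · have hle : i ≤ r := hmax i hci
          have hlt : ¬ ((r : ℕ) + 1 ≤ (i : ℕ) + 1) := by
            have : (i : ℕ) < (r : ℕ) := by
              rcases lt_or_eq_of_le hle with h | h
              · exact h
              · exact absurd h hir
            omega
          rw [_root_.map_smul, Matrix.mulVecLin_apply,
            hpow ((r : ℕ) + 1) ((i : ℕ) + 1) (by omega), if_neg hlt, smul_zero]
      have hsingle := Finset.sum_eq_single_of_mem r (Finset.mem_univ r) hzero
      have hfr : (B ^ ((r : ℕ) + 1)).mulVecLin (c r • x ((r : ℕ) + 1)) = c r • x 0 := by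
        rw [_root_.map_smul, Matrix.mulVecLin_apply,
          hpow ((r : ℕ) + 1) ((r : ℕ) + 1) (by omega), if_pos le_rfl]
        simp
      rw [hsingle, hfr, hRHS] at happ
      rcases smul_eq_zero.mp happ with h | h
      · exact hrT h
      · exact hx0 h
  -- dual functional killing the span, nonzero on x 0
  obtain ⟨f, hf0, hfmap⟩ :=
    Submodule.exists_dual_map_eq_bot_of_notMem hnm inferInstance
  set g : Module.Dual ℂ (Fin n → ℂ) := (f (x 0))⁻¹ • f with hgdef
  have hg0 : g (x 0) = 1 := by
    simp [hgdef, inv_mul_cancel₀ hf0]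
  have hgspan : ∀ j, 1 ≤ j → j < k' → g (x j) = 0 := by
    intro j h1 h2
    have hmem : x j ∈ Submodule.span ℂ
        (Set.range (fun i : Fin (k' - 1) => x ((i : ℕ) + 1))) := by
      apply Submodule.subset_span
      exact ⟨⟨j - 1, by omega⟩, by simp [Nat.sub_add_cancel h1]⟩
    have : f (x j) ∈ (Submodule.span ℂ
        (Set.range (fun i : Fin (k' - 1) => x ((i : ℕ) + 1)))).map f :=
      Submodule.mem_map_of_mem hmem
    rw [hfmap] at this
    have hfj : f (x j) = 0 := this
    simp [hgdef, hfj]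
  -- construct C, S, X
  refine ⟨Matrix.of (fun l (i : Fin m') =>
      if (i : ℕ) = 0 then star (g (fun j => if l = j then 1 else 0)) else 0),
    Matrix.of (fun (i j : Fin k') => if (i : ℕ) + 1 = (j : ℕ) then (1 : ℂ) else 0),
    Matrix.of (fun l (j : Fin k') => x (j : ℕ) l), ?_, ?_, ?_, ?_⟩
  · intro i j hij
    have : (i : ℕ) + 1 ≠ (j : ℕ) := by
      have : (j : ℕ) ≤ (i : ℕ) := hij
      omega
    simp [this]
  · intro j h
    simp
  · ext i j
    rw [Matrix.mul_apply, Matrix.mul_apply]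
    have hLHS : ∑ l, B i l * Matrix.of (fun l (j : Fin k') => x (j : ℕ) l) l j
        = B.mulVec (x (j : ℕ)) i := by
      simp [Matrix.mulVec, dotProduct]
    rw [hLHS]
    have hRHS : ∑ l : Fin k', Matrix.of (fun l (j : Fin k') => x (j : ℕ) l) i l *
        Matrix.of (fun (i j : Fin k') => if (i : ℕ) + 1 = (j : ℕ) then (1 : ℂ) else 0) l j
        = if (j : ℕ) = 0 then 0 else x ((j : ℕ) - 1) i := by
      by_cases hj0 : (j : ℕ) = 0
      · rw [if_pos hj0]
        apply Finset.sum_eq_zero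
        intro l _
        have : ¬ ((l : ℕ) + 1 = (j : ℕ)) := by omega
        simp [this]
      · rw [if_neg hj0]
        have hzero : ∀ l ∈ (Finset.univ : Finset (Fin k')),
            l ≠ (⟨(j : ℕ) - 1, by omega⟩ : Fin k') →
            Matrix.of (fun l (j : Fin k') => x (j : ℕ) l) i l *
              Matrix.of (fun (i j : Fin k') =>
                if (i : ℕ) + 1 = (j : ℕ) then (1 : ℂ) else 0) l j = 0 := by
          intro l _ hl
          have : ¬ ((l : ℕ) + 1 = (j : ℕ)) := by
            intro hcontra
            apply hl
            apply Fin.ext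
            simp only []
            omega
          simp [this]
        rw [Finset.sum_eq_single_of_mem _ (Finset.mem_univ _) hzero]
        simp [Nat.sub_add_cancel (by omega : 1 ≤ (j : ℕ))]
    rw [hRHS]
    by_cases hj0 : (j : ℕ) = 0
    · rw [if_pos hj0, hj0, hxB0]
      simp
    · rw [if_neg hj0]
      have h1 := hpow 1 (j : ℕ) j.isLt
      rw [pow_one, if_pos (by omega : 1 ≤ (j : ℕ))] at h1
      rw [h1]
  · ext i j
    rw [Matrix.mul_apply]
    simp only [Matrix.conjTranspose_apply, Matrix.of_apply]
    by_cases hi0 : (i : ℕ) = 0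
    · have hsum : ∑ l, star (if (i : ℕ) = 0
            then star (g (fun j => if l = j then 1 else 0)) else 0) * x (j : ℕ) l
          = g (x (j : ℕ)) := by
        rw [LinearMap.pi_apply_eq_sum_univ g (x (j : ℕ))]
        apply Finset.sum_congr rfl
        intro l _
        rw [if_pos hi0, star_star]
        simp [smul_eq_mul, mul_comm]
      rw [hsum]
      by_cases hj0 : (j : ℕ) = 0
      · have hx00 : x (j : ℕ) = x 0 := by rw [hj0]
        rw [hx00, hg0, if_pos ⟨hi0, hj0⟩]
      · rw [hgspan _ (by omega) j.isLt, if_neg (by tauto)]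
    · rw [if_neg (by tauto)]
      apply Finset.sum_eq_zero
      intro l _
      rw [if_neg hi0, star_zero, zero_mul]
end
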